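/- Let γ : C → ℝ² be an embedding of a candidate set of size m ≥ 2, and let a,b ∈ C be distinct. Then the perpendicular bisector of γ(a) and γ(b) intersects at most C(m−2,2) + m − 1 regions of the arrangement formed by all other bisectors. -/

import Mathlib

/-!
A ranking `u` counted here has a point `p` in its region and a point `q` in the region of `u`
with `a, b` swapped. Every other strict comparison of `u` holds on the whole segment `[p, q]`
(each is an open half-plane), and by the intermediate value theorem the segment meets the
bisector of `γ a, γ b`. Parametrising that bisector as `t ↦ A + t • v`, each ranking thus gets a
parameter; two different rankings order some pair `c, d` differently, so the crossing of the line
with the bisector of `γ c, γ d` lies strictly between their parameters. On the line `b` is as far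
as `a`, so `c, d` may be taken in `C \ {b}`: at most `C(m-1,2)` crossings separate the
parameters, leaving at most `C(m-1,2) + 1 = C(m-2,2) + m - 1` rankings.
-/

noncomputable section

abbrev Plane : Type := EuclideanSpace ℝ (Fin 2)

/-- The region of a ranking `σ` of the candidates. -/
def region {C : Type*} {m : ℕ} (γ : C → Plane) (σ : C ≃ Fin m) : Set Plane :=
  {p : Plane | ∀ a b : C, σ a < σ b → dist p (γ a) < dist p (γ b)}

open Module
open scoped RealInnerProductSpace

theorem Finset.card_le_card_add_one_of_exists_mem_Ioo {ι α : Type*} [LinearOrder α]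
    {S : Finset ι} {R : Finset α} {f : ι → α}
    (h : ∀ x ∈ S, ∀ y ∈ S, x ≠ y → f x ≤ f y → ∃ r ∈ R, r ∈ Set.Ioo (f x) (f y)) :
    S.card ≤ R.card + 1 := by
  classical
  set below : ι → ℕ := fun x => (R.filter (· < f x)).card
  have below_lt : ∀ x ∈ S, ∀ y ∈ S, x ≠ y → f x ≤ f y → below x < below y := by
    intro x hx y hy hxy hle
    obtain ⟨r, hr, hxr, hry⟩ := h x hx y hy hxy hle
    refine Finset.card_lt_card ((Finset.ssubset_iff_of_subset ?_).2 ⟨r, ?_, ?_⟩)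
    · intro t
      simp only [Finset.mem_filter]
      exact fun ⟨htR, ht⟩ => ⟨htR, ht.trans_le hle⟩
    · simp [hr, hry]
    · simp [hxr.le]
  calc S.card ≤ (Finset.range (R.card + 1)).card :=
        Finset.card_le_card_of_injOn below
          (fun x _ => by simpa [Nat.lt_succ_iff] using Finset.card_filter_le _ _) ?_
    _ = R.card + 1 := Finset.card_range _
  intro x hx y hy hxy
  by_contra hne
  rcases le_total (f x) (f y) with hle | hle
  · exact (below_lt x hx y hy hne hle).ne hxy
  · exact (below_lt y hy x hx (Ne.symm hne) hle).ne hxy.symm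

theorem Finset.card_image_offDiag_le_of_comm {α β : Type*} [DecidableEq α] [DecidableEq β]
    {f : α → α → β} (hf : ∀ x y, f x y = f y x) (s : Finset α) :
    (s.offDiag.image fun p => f p.1 p.2).card ≤ s.card.choose 2 := by
  have hfactor : s.offDiag.image (fun p => f p.1 p.2) =
      (s.offDiag.image Sym2.mk.uncurry).image (Sym2.lift ⟨f, hf⟩) := by
    rw [Finset.image_image]; rfl
  rw [hfactor, ← Sym2.card_image_offDiag]
  exact Finset.card_image_le

theorem Nat.choose_sub_one_two_add_one {m : ℕ} (hm : 2 ≤ m) :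
    (m - 1).choose 2 + 1 = (m - 2).choose 2 + m - 1 := by
  obtain ⟨n, rfl⟩ := Nat.exists_eq_add_of_le hm
  have hpascal : (n + 1).choose 2 = n.choose 1 + n.choose 2 := Nat.choose_succ_succ' n 1
  rw [Nat.add_sub_cancel_left, show 2 + n - 1 = n + 1 by omega, hpascal, Nat.choose_one_right]
  omega

theorem neg_div_mem_Ioo_of_add_mul_neg_of_add_mul_pos {α β s₁ s₂ : ℝ} (hs : s₁ ≤ s₂)
    (h₁ : α + s₁ * β < 0) (h₂ : 0 < α + s₂ * β) : -α / β ∈ Set.Ioo s₁ s₂ := by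
  have hβ : 0 < β := by nlinarith
  constructor
  · rw [lt_div_iff₀ hβ]; linarith
  · rw [div_lt_iff₀ hβ]; linarith

theorem Equiv.exists_lt_and_lt_of_ne {α β : Type*} [LinearOrder β] [Finite β] {u₁ u₂ : α ≃ β}
    (h : u₁ ≠ u₂) : ∃ c d, u₁ c < u₁ d ∧ u₂ d < u₂ c := by
  by_contra! hcon
  have hmono : StrictMono (u₁.symm.trans u₂) := fun i j hij =>
    (hcon _ _ (by simpa using hij)).lt_of_ne (by simpa using hij.ne)
  exact h (Equiv.ext fun c => by simpa using (congrFun hmono.eq_id (u₁ c)).symm)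

theorem Equiv.swap_trans_apply_lt_of_lt {C : Type*} [DecidableEq C] {m : ℕ} {u : C ≃ Fin m}
    {a b : C} (hu : (u a : ℕ) + 1 = u b) {c d : C} (hcd : u c < u d) (hne : (c, d) ≠ (a, b)) :
    ((Equiv.swap a b).trans u) c < ((Equiv.swap a b).trans u) d := by
  have hval : ∀ x y, x ≠ y → (u x : ℕ) ≠ u y := fun x y h h' => h (u.injective (Fin.ext h'))
  rw [Fin.lt_def] at hcd ⊢
  simp only [Equiv.trans_apply, Equiv.swap_apply_def]
  split_ifs <;> grind

section NormedSpace

variable {E : Type*} [SeminormedAddCommGroup E] [NormedSpace ℝ E]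

theorem exists_mem_segment_dist_eq_dist {p q x y : E} (hp : dist p x < dist p y)
    (hq : dist q y < dist q x) : ∃ r ∈ segment ℝ p q, dist r x = dist r y :=
  (convex_segment p q).isPreconnected.intermediate_value₂ (left_mem_segment ℝ p q)
    (right_mem_segment ℝ p q) (continuous_id.dist continuous_const).continuousOn
    (continuous_id.dist continuous_const).continuousOn hp.le hq.le

end NormedSpace

def RanksExcept {E C : Type*} [Dist E] {m : ℕ} (γ : C → E) (u : C ≃ Fin m) (a b : C) (z : E) :
    Prop :=
  ∀ c d, u c < u d → (c, d) ≠ (a, b) → dist z (γ c) < dist z (γ d)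

theorem exists_mem_offDiag_dist_lt_dist_of_ne {E C : Type*} [Dist E] [Fintype C] [DecidableEq C]
    {m : ℕ} {γ : C → E} {a b : C} {u₁ u₂ : C ≃ Fin m} (hu₁ : u₁ a < u₁ b) (hu₂ : u₂ a < u₂ b)
    (hne : u₁ ≠ u₂) {z₁ z₂ : E} (hz₁ : dist z₁ (γ a) = dist z₁ (γ b))
    (hz₂ : dist z₂ (γ a) = dist z₂ (γ b)) (h₁ : RanksExcept γ u₁ a b z₁)
    (h₂ : RanksExcept γ u₂ a b z₂) :
    ∃ cd ∈ (Finset.univ.erase b).offDiag,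
      dist z₁ (γ cd.1) < dist z₁ (γ cd.2) ∧ dist z₂ (γ cd.2) < dist z₂ (γ cd.1) := by
  obtain ⟨c, d, hc, hd⟩ := Equiv.exists_lt_and_lt_of_ne hne
  have hcd : (c, d) ≠ (a, b) := by rintro ⟨⟩; exact hd.not_gt hu₂
  have hdc : (d, c) ≠ (a, b) := by rintro ⟨⟩; exact hc.not_gt hu₁
  have hab : a ≠ b := fun h => hu₁.ne (congrArg u₁ h)
  have hcd' : c ≠ d := fun h => hc.ne (congrArg u₁ h)
  let κ : C → C := fun x => if x = b then a else x
  have hκ : ∀ z, dist z (γ a) = dist z (γ b) → ∀ x, dist z (γ (κ x)) = dist z (γ x) := by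
    intro z hz x
    by_cases hx : x = b
    · rw [show κ x = a from if_pos hx, hx, hz]
    · rw [show κ x = x from if_neg hx]
  refine ⟨(κ c, κ d), ?_, ?_, ?_⟩
  · simp only [Finset.mem_offDiag, Finset.mem_erase, Finset.mem_univ, and_true, κ]
    split_ifs <;> grind
  · simpa only [hκ z₁ hz₁] using h₁ c d hc hcd
  · simpa only [hκ z₂ hz₂] using h₂ d c hd hdc

section InnerProductSpace

variable {E : Type*} [NormedAddCommGroup E] [InnerProductSpace ℝ E]

theorem convex_setOf_dist_lt_dist (x y : E) : Convex ℝ {z | dist z x < dist z y} := by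
  have hset : {z | dist z x < dist z y} = {z | ⟪y - x, z⟫ < (‖y‖ ^ 2 - ‖x‖ ^ 2) / 2} := by
    ext z
    rw [Set.mem_ofPred_eq, Set.mem_ofPred_eq, dist_eq_norm, dist_eq_norm,
      ← sq_lt_sq₀ (norm_nonneg _) (norm_nonneg _), norm_sub_sq_real, norm_sub_sq_real,
      inner_sub_left, real_inner_comm y z, real_inner_comm x z]
    constructor <;> intro <;> linarith
  rw [hset]
  exact convex_halfSpace_lt (innerₛₗ ℝ (y - x)).isLinear _

theorem dist_add_smul_sq_sub_dist_add_smul_sq (A v x y : E) (t : ℝ) :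
    dist (A + t • v) x ^ 2 - dist (A + t • v) y ^ 2 =
      (dist A x ^ 2 - dist A y ^ 2) + t * (2 * ⟪v, y - x⟫) := by
  simp only [dist_eq_norm, add_sub_right_comm A, norm_add_sq_real, inner_smul_right,
    inner_sub_right, real_inner_comm v]
  ring

-- the parameter at which `t ↦ A + t • v` crosses the bisector of `x, y` (junk when parallel)
def crossingParam (A v x y : E) : ℝ := -(dist A x ^ 2 - dist A y ^ 2) / (2 * ⟪v, y - x⟫)

theorem crossingParam_comm (A v x y : E) : crossingParam A v x y = crossingParam A v y x := by
  rw [crossingParam, crossingParam, ← neg_sub x y, inner_neg_right]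
  ring

theorem crossingParam_mem_Ioo {A v x y : E} {s₁ s₂ : ℝ} (hs : s₁ ≤ s₂)
    (h₁ : dist (A + s₁ • v) x < dist (A + s₁ • v) y)
    (h₂ : dist (A + s₂ • v) y < dist (A + s₂ • v) x) : crossingParam A v x y ∈ Set.Ioo s₁ s₂ := by
  rw [← sq_lt_sq₀ dist_nonneg dist_nonneg, ← sub_neg, dist_add_smul_sq_sub_dist_add_smul_sq] at h₁
  rw [← sq_lt_sq₀ dist_nonneg dist_nonneg, ← sub_pos, dist_add_smul_sq_sub_dist_add_smul_sq] at h₂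
  exact neg_div_mem_Ioo_of_add_mul_neg_of_add_mul_pos hs h₁ h₂

theorem exists_dist_eq_dist_iff_eq_midpoint_add_smul [Fact (finrank ℝ E = 2)] {p₁ p₂ : E}
    (h : p₁ ≠ p₂) :
    ∃ v : E, ∀ z, dist z p₁ = dist z p₂ ↔ ∃ t : ℝ, z = midpoint ℝ p₁ p₂ + t • v := by
  have : FiniteDimensional ℝ E := .of_fact_finrank_eq_succ 1
  have hp : p₂ - p₁ ≠ 0 := sub_ne_zero.2 h.symm
  obtain ⟨⟨v, hvK⟩, hv⟩ := (finrank_pos_iff_exists_ne_zero (R := ℝ)).1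
    (by rw [Submodule.finrank_orthogonal_span_singleton (n := 1) hp]; norm_num)
  rw [Submodule.mem_orthogonal_singleton_iff_inner_right] at hvK
  have hv0 : v ≠ 0 := fun h0 => hv (Subtype.ext h0)
  refine ⟨v, fun z => ?_⟩
  rw [← AffineSubspace.mem_perpBisector_iff_dist_eq,
    AffineSubspace.mem_perpBisector_iff_inner_eq_zero']
  constructor
  · intro hz
    obtain ⟨t, ht⟩ := Submodule.mem_span_singleton.1
      (Submodule.mem_span_singleton_of_inner_eq_zero_of_inner_eq_zero hp hv0 hz hvK)
    exact ⟨t, by rw [ht, vsub_eq_sub, add_sub_cancel]⟩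
  · rintro ⟨t, rfl⟩
    simp [inner_smul_right, hvK]

variable {C : Type*} {m : ℕ}

theorem exists_dist_eq_dist_ranksExcept [DecidableEq C] {γ : C → E} {u : C ≃ Fin m} {a b : C}
    (hu : (u a : ℕ) + 1 = u b) {p q : E}
    (hp : ∀ c d, u c < u d → dist p (γ c) < dist p (γ d))
    (hq : ∀ c d, (Equiv.swap a b).trans u c < (Equiv.swap a b).trans u d →
      dist q (γ c) < dist q (γ d)) :
    ∃ r, dist r (γ a) = dist r (γ b) ∧ RanksExcept γ u a b r := by
  have hab : u a < u b := by rw [Fin.lt_def]; omega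
  have hba : (Equiv.swap a b).trans u b < (Equiv.swap a b).trans u a := by
    simpa only [Equiv.trans_apply, Equiv.swap_apply_left, Equiv.swap_apply_right] using hab
  obtain ⟨r, hr, hrab⟩ := exists_mem_segment_dist_eq_dist (hp a b hab) (hq b a hba)
  refine ⟨r, hrab, fun c d hcd hne => ?_⟩
  exact (convex_setOf_dist_lt_dist (γ c) (γ d)).segment_subset (hp c d hcd)
    (hq c d (Equiv.swap_trans_apply_lt_of_lt hu hcd hne)) hr

theorem card_le_choose_of_ranksExcept [Fintype C] [DecidableEq C] {γ : C → E} {a b : C}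
    {A v : E} (hline : ∀ t : ℝ, dist (A + t • v) (γ a) = dist (A + t • v) (γ b))
    {S : Finset (C ≃ Fin m)} (hS : ∀ u ∈ S, u a < u b) {s : (C ≃ Fin m) → ℝ}
    (hs : ∀ u ∈ S, RanksExcept γ u a b (A + s u • v)) :
    S.card ≤ (Fintype.card C - 1).choose 2 + 1 := by
  let R := (Finset.univ.erase b).offDiag.image fun cd => crossingParam A v (γ cd.1) (γ cd.2)
  have hR : R.card ≤ (Fintype.card C - 1).choose 2 := by
    grw [Finset.card_image_offDiag_le_of_comm (fun x y => crossingParam_comm A v (γ x) (γ y)),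
      Finset.card_erase_of_mem (Finset.mem_univ b), Finset.card_univ]
  refine (Finset.card_le_card_add_one_of_exists_mem_Ioo (R := R) (f := s)
    fun u₁ h₁ u₂ h₂ hne hle => ?_).trans (by omega)
  obtain ⟨cd, hcd, hlt₁, hlt₂⟩ := exists_mem_offDiag_dist_lt_dist_of_ne (hS u₁ h₁) (hS u₂ h₂) hne
    (hline _) (hline _) (hs u₁ h₁) (hs u₂ h₂)
  exact ⟨_, Finset.mem_image_of_mem _ hcd, crossingParam_mem_Ioo hle hlt₁ hlt₂⟩

end InnerProductSpace

/-- Each cell of the arrangement of the other bisectors that the bisector of `γ a, γ b` crosses is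
split by it into the regions of two rankings differing only by swapping the consecutive candidates
`a, b`; the rankings counted are the first of each such pair. -/
theorem stmt_16_general {C : Type*} [Fintype C] [DecidableEq C] (γ : C → Plane) (hγ : Function.Injective γ)
    (a b : C) (hab : a ≠ b) :
    Set.ncard {u : C ≃ Fin (Fintype.card C) |
        ((u a : ℕ) + 1 = (u b : ℕ)) ∧ (region γ u).Nonempty ∧
        (region γ ((Equiv.swap a b).trans u)).Nonempty} ≤
      Nat.choose (Fintype.card C - 2) 2 + Fintype.card C - 1 := by
  classical
  have : Fact (finrank ℝ Plane = 2) := ⟨finrank_euclideanSpace_fin⟩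
  obtain ⟨v, hv⟩ := exists_dist_eq_dist_iff_eq_midpoint_add_smul (hγ.ne hab)
  set A := midpoint ℝ (γ a) (γ b)
  have hparam : ∀ u : C ≃ Fin (Fintype.card C), (u a : ℕ) + 1 = u b → (region γ u).Nonempty →
      (region γ ((Equiv.swap a b).trans u)).Nonempty →
      ∃ s : ℝ, RanksExcept γ u a b (A + s • v) := by
    rintro u hu ⟨p, hp⟩ ⟨q, hq⟩
    obtain ⟨r, hr, hru⟩ := exists_dist_eq_dist_ranksExcept hu hp hq
    obtain ⟨s, rfl⟩ := (hv r).1 hr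
    exact ⟨s, hru⟩
  choose! s hs using hparam
  rw [Set.ncard_eq_toFinset_card', ← Nat.choose_sub_one_two_add_one
    (Fintype.one_lt_card_iff.2 ⟨a, b, hab⟩)]
  refine card_le_choose_of_ranksExcept (s := s) (fun t => (hv _).2 ⟨t, rfl⟩) ?_ ?_ <;>
    intro u hu <;> obtain ⟨hadj, hp, hq⟩ := Set.mem_toFinset.1 hu
  · rw [Fin.lt_def]; omega
  · exact hs u hadj hp hq

/-- the bisector of `γ a` and `γ b` crosses at most `C(m−2,2) + m − 1`
regions of the arrangement of the remaining bisectors. Equivalently (each crossed cell of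
the remaining arrangement is split into the two regions of a pair of orders differing
only by swapping the consecutive candidates `a,b`): the number of orders `u` ranking `a`
immediately before `b` such that both the region of `u` and the region of `u` with `a,b`
swapped are nonempty is at most `C(m−2,2) + m − 1`. -/
theorem stmt_16 {C : Type*} [Fintype C] [DecidableEq C] (γ : C → Plane) (hγ : Function.Injective γ)
    (hm : 2 ≤ Fintype.card C) (a b : C) (hab : a ≠ b) :
    Set.ncard {u : C ≃ Fin (Fintype.card C) |
        ((u a : ℕ) + 1 = (u b : ℕ)) ∧ (region γ u).Nonempty ∧
        (region γ ((Equiv.swap a b).trans u)).Nonempty} ≤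
      Nat.choose (Fintype.card C - 2) 2 + Fintype.card C - 1 :=
  stmt_16_general γ hγ a b hab
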